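/- Let L = L₀ ⊕ L₁ be a nilpotent complex Leibniz superalgebra of dimension d = dim L₀ + dim L₁. Then L has the maximal nilindex d + 1 if and only if L is single-generated, i.e., there exists an element z ∈ L such that the smallest linear subspace of L containing z and closed under the bracket is L itself. -/

import Mathlib

/-!
In a nilpotent superalgebra each nonzero term of the descending central series strictly contains
the next one, so the nilindex is at most `d + 1`, with equality exactly when every step drops the
dimension by one; then `L²` has codimension one and `L = ℂ z + L²` for some `z`.

Conversely, `L = ℂ z + L²` already forces `L^k = ℂ z_k + L^{k+1}`, where `z_1 = z` and
`z_{k+1} = [z_k, z]`: the superidentity shows `[L^k, L²] ⊆ L^{k+2}`, so only the term `[z_k, z]` of `[L^k, L]` can escape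
`L^{k+2}`. Hence each step drops the dimension by at most one, giving nilindex `d + 1`, and a
subalgebra containing `z` contains every `z_k`, hence (by nilpotency) all of `L`.
-/

/-- A complex Leibniz superalgebra: a complex vector space `V` with an internal
direct-sum decomposition `V = L0 ⊕ L1`, a bilinear bracket respecting the
`ℤ/2`-grading and satisfying the Leibniz superidentity (for homogeneous
second and third arguments). -/
structure LeibnizSuper (V : Type) [AddCommGroup V] [Module ℂ V] where
  bracket : V →ₗ[ℂ] V →ₗ[ℂ] V
  L0 : Submodule ℂ V
  L1 : Submodule ℂ V
  compl : IsCompl L0 L1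
  g00 : ∀ a ∈ L0, ∀ b ∈ L0, bracket a b ∈ L0
  g01 : ∀ a ∈ L0, ∀ b ∈ L1, bracket a b ∈ L1
  g10 : ∀ a ∈ L1, ∀ b ∈ L0, bracket a b ∈ L1
  g11 : ∀ a ∈ L1, ∀ b ∈ L1, bracket a b ∈ L0
  super_jacobi : ∀ (x : V) (α β : Bool) (y z : V),
    y ∈ (if α then L1 else L0) → z ∈ (if β then L1 else L0) →
    bracket x (bracket y z) =
      bracket (bracket x y) z - (if α && β then (-1 : ℂ) else 1) • bracket (bracket x z) y

variable {V : Type} [AddCommGroup V] [Module ℂ V]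

/-- Descending central series of a Leibniz superalgebra:
`dcs S k` is `L^{k+1}`, i.e. `dcs S 0 = L¹ = L`. -/
def LeibnizSuper.dcs (S : LeibnizSuper V) : ℕ → Submodule ℂ V
  | 0 => ⊤
  | k + 1 => Submodule.span ℂ {v | ∃ a ∈ S.dcs k, ∃ b : V, v = S.bracket a b}

/-- Descending central series of the even part `L₀` (a Leibniz algebra):
`dcs0 S k` is `L₀^{k+1}`, i.e. `dcs0 S 0 = L₀`. -/
def LeibnizSuper.dcs0 (S : LeibnizSuper V) : ℕ → Submodule ℂ V
  | 0 => S.L0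
  | k + 1 => Submodule.span ℂ {v | ∃ a ∈ S.dcs0 k, ∃ b ∈ S.L0, v = S.bracket a b}

/-- `G` generates the superalgebra: the smallest linear subspace containing `G`
and closed under the bracket is all of `V`. -/
def LeibnizSuper.generates (S : LeibnizSuper V) (G : Set V) : Prop :=
  ∀ p : Submodule ℂ V, G ⊆ p → (∀ a ∈ p, ∀ b ∈ p, S.bracket a b ∈ p) → p = ⊤

/-- The nilindex: the minimal `s ≥ 1` with `L^s = 0`. -/
noncomputable def LeibnizSuper.nilindex (S : LeibnizSuper V) : ℕ :=
  sInf {s | 1 ≤ s ∧ S.dcs (s - 1) = ⊥}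

/-- The characteristic-sequence condition `n₁ ≤ n - 2`, `m₁ ≤ m - 1`:
for every `x ∈ L₀ \ L₀²` the right multiplication operator `R_x`
satisfies `R_x^{n-2} = 0` on `L₀` and `R_x^{m-1} = 0` on `L₁`. -/
def LeibnizSuper.charSeqLE (S : LeibnizSuper V) (n m : ℕ) : Prop :=
  ∀ x ∈ S.L0, x ∉ S.dcs0 1 →
    (∀ v ∈ S.L0, ((S.bracket.flip x : Module.End ℂ V) ^ (n - 2)) v = 0) ∧
    (∀ v ∈ S.L1, ((S.bracket.flip x : Module.End ℂ V) ^ (m - 1)) v = 0)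


theorem Submodule.exists_span_singleton_sup_eq_top {K W : Type*} [DivisionRing K]
    [AddCommGroup W] [Module K W] [FiniteDimensional K W] (p : Submodule K W)
    (hp : Module.finrank K W ≤ Module.finrank K p + 1) : ∃ z, K ∙ z ⊔ p = ⊤ := by
  by_cases htop : p = ⊤
  · exact ⟨0, by simp [htop]⟩
  obtain ⟨z, hz⟩ : ∃ z, z ∉ p := by
    by_contra! h
    exact htop (Submodule.eq_top_iff'.2 h)
  refine ⟨z, Submodule.eq_top_of_finrank_eq (le_antisymm (Submodule.finrank_le _) ?_)⟩
  have hlt : p < K ∙ z ⊔ p := lt_of_le_of_ne le_sup_right fun h =>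
    hz (h ▸ Submodule.mem_sup_left (Submodule.mem_span_singleton_self z))
  have := Submodule.finrank_lt_finrank_of_lt hlt
  omega

namespace LeibnizSuper

variable (S : LeibnizSuper V)

lemma bracket_mem_dcs_succ {k : ℕ} {a : V} (ha : a ∈ S.dcs k) (b : V) :
    S.bracket a b ∈ S.dcs (k + 1) :=
  Submodule.subset_span ⟨a, ha, b, rfl⟩

lemma dcs_succ_le (k : ℕ) : S.dcs (k + 1) ≤ S.dcs k := by
  induction k with
  | zero => exact le_top
  | succ k ih =>
    refine Submodule.span_le.2 ?_
    rintro _ ⟨a, ha, b, rfl⟩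
    exact S.bracket_mem_dcs_succ (ih ha) b

lemma dcs_antitone : Antitone S.dcs :=
  antitone_nat_of_succ_le S.dcs_succ_le

lemma dcs_add_eq_of_succ_eq {k : ℕ} (h : S.dcs (k + 1) = S.dcs k) (j : ℕ) :
    S.dcs (k + j) = S.dcs k := by
  induction j with
  | zero => rfl
  | succ j ih =>
    change Submodule.span ℂ {v | ∃ a ∈ S.dcs (k + j), ∃ b, v = S.bracket a b} = _
    rw [ih]
    exact h

lemma dcs_succ_lt (hnilp : ∃ N, S.dcs N = ⊥) {k : ℕ} (hk : S.dcs k ≠ ⊥) :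
    S.dcs (k + 1) < S.dcs k := by
  refine lt_of_le_of_ne (S.dcs_succ_le k) fun h => hk ?_
  obtain ⟨N, hN⟩ := hnilp
  rw [← S.dcs_add_eq_of_succ_eq h N, ← le_bot_iff, ← hN]
  exact S.dcs_antitone (Nat.le_add_left N k)

lemma nilindex_eq_succ_iff (n : ℕ) :
    S.nilindex = n + 1 ↔ S.dcs n = ⊥ ∧ ∀ k < n, S.dcs k ≠ ⊥ := by
  have hclosed : ∀ s t : ℕ, s ≤ t → s ∈ {s | 1 ≤ s ∧ S.dcs (s - 1) = ⊥} →
      t ∈ {s | 1 ≤ s ∧ S.dcs (s - 1) = ⊥} := fun s t hst ⟨hs, hbot⟩ =>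
    ⟨hs.trans hst, le_bot_iff.1 (hbot ▸ S.dcs_antitone (by omega))⟩
  rw [nilindex, Nat.sInf_upward_closed_eq_succ_iff hclosed]
  simp only [Set.mem_ofPred_eq, le_add_iff_nonneg_left, zero_le, add_tsub_cancel_right, true_and]
  refine and_congr_right fun _ => ⟨fun h k hk hbot => h ⟨by omega, ?_⟩, fun h ⟨hn, hbot⟩ => ?_⟩
  · exact le_bot_iff.1 (hbot ▸ S.dcs_antitone (by omega))
  · exact h (n - 1) (by omega) hbot

lemma bracket_mem_of_homogeneous (p : Submodule ℂ V)
    (h : ∀ (α β : Bool) (y z : V), y ∈ (if α then S.L1 else S.L0) →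
      z ∈ (if β then S.L1 else S.L0) → S.bracket y z ∈ p) (c w : V) :
    S.bracket c w ∈ p := by
  have hdecomp : ∀ v : V, v ∈ S.L0 ⊔ S.L1 := fun v => S.compl.codisjoint.eq_top ▸ trivial
  obtain ⟨c0, hc0, c1, hc1, rfl⟩ := Submodule.mem_sup.1 (hdecomp c)
  obtain ⟨w0, hw0, w1, hw1, rfl⟩ := Submodule.mem_sup.1 (hdecomp w)
  simp only [map_add, LinearMap.add_apply]
  exact add_mem (add_mem (h false false _ _ hc0 hw0) (h true false _ _ hc1 hw0))
    (add_mem (h false true _ _ hc0 hw1) (h true true _ _ hc1 hw1))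

lemma bracket_mem_dcs_add_two {m : ℕ} {a b : V} (ha : a ∈ S.dcs m) (hb : b ∈ S.dcs 1) :
    S.bracket a b ∈ S.dcs (m + 2) := by
  suffices S.dcs 1 ≤ (S.dcs (m + 2)).comap (S.bracket a) from this hb
  refine Submodule.span_le.2 ?_
  rintro _ ⟨c, -, w, rfl⟩
  refine S.bracket_mem_of_homogeneous _ (fun α β y z hy hz => ?_) c w
  change S.bracket a (S.bracket y z) ∈ S.dcs (m + 2)
  rw [S.super_jacobi a α β y z hy hz]
  exact sub_mem (S.bracket_mem_dcs_succ (S.bracket_mem_dcs_succ ha y) z)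
    (Submodule.smul_mem _ _ (S.bracket_mem_dcs_succ (S.bracket_mem_dcs_succ ha z) y))

/-- `S.rightPow z m` is `z_{m+1}`, matching the shift in `S.dcs m = L^{m+1}`. -/
def rightPow (z : V) : ℕ → V
  | 0 => z
  | m + 1 => S.bracket (rightPow z m) z

lemma rightPow_mem_dcs (z : V) (m : ℕ) : S.rightPow z m ∈ S.dcs m := by
  induction m with
  | zero => trivial
  | succ m ih => exact S.bracket_mem_dcs_succ ih z

lemma dcs_le_span_rightPow_sup {z : V} (hz : ℂ ∙ z ⊔ S.dcs 1 = ⊤) (m : ℕ) :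
    S.dcs m ≤ ℂ ∙ S.rightPow z m ⊔ S.dcs (m + 1) := by
  induction m with
  | zero => exact hz.ge
  | succ m ih =>
    refine Submodule.span_le.2 ?_
    rintro _ ⟨a, ha, b, rfl⟩
    obtain ⟨_, hc, a', ha', rfl⟩ := Submodule.mem_sup.1 (ih ha)
    obtain ⟨c, rfl⟩ := Submodule.mem_span_singleton.1 hc
    obtain ⟨_, he, b', hb', rfl⟩ := Submodule.mem_sup.1 (hz.ge (Submodule.mem_top (x := b)))
    obtain ⟨e, rfl⟩ := Submodule.mem_span_singleton.1 he
    have hpow : S.bracket (S.rightPow z m) z ∈ ℂ ∙ S.rightPow z (m + 1) :=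
      Submodule.mem_span_singleton_self (S.rightPow z (m + 1))
    have hdcs : ∀ {v}, v ∈ S.dcs (m + 2) → v ∈ ℂ ∙ S.rightPow z (m + 1) ⊔ S.dcs (m + 2) :=
      (Submodule.mem_sup_right ·)
    simp only [map_add, map_smul, LinearMap.add_apply, LinearMap.smul_apply]
    refine add_mem (Submodule.smul_mem _ _ (add_mem ?_ ?_)) (add_mem ?_ ?_)
    · exact Submodule.smul_mem _ _ (Submodule.mem_sup_left hpow)
    · exact hdcs (S.bracket_mem_dcs_succ ha' z)
    · exact Submodule.smul_mem _ _ (hdcs (S.bracket_mem_dcs_add_two (S.rightPow_mem_dcs z m) hb'))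
    · exact hdcs (S.bracket_mem_dcs_succ ha' b')

lemma generates_singleton_of_span_sup_dcs_one_eq_top (hnilp : ∃ N, S.dcs N = ⊥) {z : V}
    (hz : ℂ ∙ z ⊔ S.dcs 1 = ⊤) : S.generates {z} := by
  intro p hzp hclosed
  have hpow : ∀ m, S.rightPow z m ∈ p := fun m => by
    induction m with
    | zero => exact hzp rfl
    | succ m ih => exact hclosed _ ih _ (hzp rfl)
  have hcover : ∀ t, ⊤ ≤ p ⊔ S.dcs t := fun t => by
    induction t with
    | zero => exact le_sup_right
    | succ t ih =>
      calc ⊤ ≤ p ⊔ S.dcs t := ih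
        _ ≤ p ⊔ (ℂ ∙ S.rightPow z t ⊔ S.dcs (t + 1)) :=
          sup_le_sup_left (S.dcs_le_span_rightPow_sup hz t) p
        _ ≤ p ⊔ S.dcs (t + 1) := by
          rw [← sup_assoc, sup_eq_left.2 ((Submodule.span_singleton_le_iff_mem _ _).2 (hpow t))]
  obtain ⟨N, hN⟩ := hnilp
  simpa [hN] using hcover N

lemma span_sup_dcs_one_eq_top_of_generates_singleton {z : V} (hz : S.generates {z}) :
    ℂ ∙ z ⊔ S.dcs 1 = ⊤ :=
  hz _ (Set.singleton_subset_iff.2 (Submodule.mem_sup_left (Submodule.mem_span_singleton_self z)))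
    fun a _ b _ => Submodule.mem_sup_right (S.bracket_mem_dcs_succ (Submodule.mem_top (x := a)) b)

variable [FiniteDimensional ℂ V]

lemma sub_le_finrank_dcs (hnilp : ∃ N, S.dcs N = ⊥) {n : ℕ}
    (hn : ∀ k < n, S.dcs k ≠ ⊥) (i : ℕ) : n - i ≤ Module.finrank ℂ (S.dcs i) := by
  induction h : n - i generalizing i with
  | zero => exact Nat.zero_le _
  | succ t ih =>
    have hstep := Submodule.finrank_lt_finrank_of_lt (S.dcs_succ_lt hnilp (hn i (by omega)))
    have := ih (i + 1) (by omega)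
    omega

lemma dcs_finrank_eq_bot (hnilp : ∃ N, S.dcs N = ⊥) :
    S.dcs (Module.finrank ℂ V) = ⊥ := by
  by_contra h
  have hne : ∀ k < Module.finrank ℂ V + 1, S.dcs k ≠ ⊥ := fun k hk hk' =>
    h (le_bot_iff.1 (hk' ▸ S.dcs_antitone (Nat.lt_succ_iff.1 hk)))
  have := S.sub_le_finrank_dcs hnilp hne 0
  rw [show S.dcs 0 = ⊤ from rfl, finrank_top] at this
  omega

lemma finrank_le_finrank_dcs_add {z : V} (hz : ℂ ∙ z ⊔ S.dcs 1 = ⊤) (k : ℕ) :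
    Module.finrank ℂ V ≤ Module.finrank ℂ (S.dcs k) + k := by
  induction k with
  | zero => rw [show S.dcs 0 = ⊤ from rfl, finrank_top]; omega
  | succ k ih =>
    have hsup := Submodule.finrank_mono (S.dcs_le_span_rightPow_sup hz k)
    have hadd := Submodule.finrank_add_le_finrank_add_finrank (ℂ ∙ S.rightPow z k) (S.dcs (k + 1))
    have hline : Module.finrank ℂ (ℂ ∙ S.rightPow z k) ≤ 1 :=
      (finrank_span_le_card {S.rightPow z k}).trans (by simp)
    omega

end LeibnizSuper

/-- a nilpotent complex Leibniz superalgebra of dimension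
`d = dim L₀ + dim L₁` has the maximal nilindex `d + 1` if and only if it is
single-generated. -/
theorem leibnizSuper_maximal_nilindex_iff_single_generated
    {V : Type} [AddCommGroup V] [Module ℂ V] [FiniteDimensional ℂ V]
    (S : LeibnizSuper V)
    (hnilp : ∃ s, S.dcs s = ⊥) :
    S.nilindex = Module.finrank ℂ S.L0 + Module.finrank ℂ S.L1 + 1 ↔
      ∃ z : V, S.generates {z} := by
  rw [Submodule.finrank_add_eq_of_isCompl S.compl, S.nilindex_eq_succ_iff]
  constructor
  · rintro ⟨-, hne⟩
    have hcodim := S.sub_le_finrank_dcs hnilp hne 1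
    obtain ⟨z, hz⟩ := (S.dcs 1).exists_span_singleton_sup_eq_top (by omega)
    exact ⟨z, S.generates_singleton_of_span_sup_dcs_one_eq_top hnilp hz⟩
  · rintro ⟨z, hz⟩
    refine ⟨S.dcs_finrank_eq_bot hnilp, fun k hk hbot => ?_⟩
    have := S.finrank_le_finrank_dcs_add (S.span_sup_dcs_one_eq_top_of_generates_singleton hz) k
    rw [hbot, finrank_bot] at this
    omega
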